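/- arXiv:1111.2843 — 2 statements merged into one kernel-verified Lean document; each statement's English description precedes it below -/
import Mathlib

section
/- Let 𝓑 be a directed family with U ∈ 𝓑 in which every constructible set has a unique swiss cheese decomposition. Then 𝓑 is unpackable. -/
/-!
A ball `A` that is the union of a finite family `H` of proper sub-balls is also the union of the
maximal members of `H`, which in a directed family are pairwise disjoint. So `A` has two swiss
cheese decompositions without holes: the single cheese `A`, and the maximal members of `H`.
Uniqueness forces `A` to be one of the latter, contradicting properness.
-/

variable {U : Type*}

/-- A directed family: nonempty sets, any two nested or disjoint. -/
def DirFam (𝓑 : Set (Set U)) : Prop :=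
  (∀ B ∈ 𝓑, B.Nonempty) ∧
    ∀ B₀ ∈ 𝓑, ∀ B₁ ∈ 𝓑, B₀ ⊆ B₁ ∨ B₁ ⊆ B₀ ∨ B₀ ∩ B₁ = ∅

/-- Constructible sets: finite boolean combinations of balls. -/
inductive Constr (𝓑 : Set (Set U)) : Set U → Prop
  | ball {B : Set U} : B ∈ 𝓑 → Constr 𝓑 B
  | compl {X : Set U} : Constr 𝓑 X → Constr 𝓑 Xᶜ
  | union {X Y : Set U} : Constr 𝓑 X → Constr 𝓑 Y → Constr 𝓑 (X ∪ Y)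

/-- A swiss cheese decomposition of X. -/
def IsSCD (𝓑 : Set (Set U)) (X : Set U) (n : ℕ) (A : Fin n → Set U)
    (H : Fin n → Set (Set U)) : Prop :=
  (∀ i, A i ∈ 𝓑) ∧ (∀ i, (H i).Finite) ∧ (∀ i, H i ⊆ 𝓑) ∧
  (∀ i, ∀ B ∈ H i, B ⊂ A i) ∧
  (∀ i, ∀ B ∈ H i, ∀ C ∈ H i, B ≠ C → ¬B ⊆ C) ∧
  (∀ i j, i ≠ j → (A i \ ⋃₀ H i) ∩ (A j \ ⋃₀ H j) = ∅) ∧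
  (∀ i j, A i ∉ H j) ∧
  (⋃ i, A i \ ⋃₀ H i) = X

/-- Unpackable: no ball is a finite union of proper sub-balls. -/
def Unpackable (𝓑 : Set (Set U)) : Prop :=
  ∀ A ∈ 𝓑, ∀ H : Set (Set U), H.Finite → H ⊆ 𝓑 → (∀ B ∈ H, B ⊂ A) → A ≠ ⋃₀ H

theorem Set.Finite.sUnion_setOf_maximal {α : Type*} {H : Set (Set α)} (hH : H.Finite) :
    ⋃₀ {B | Maximal (· ∈ H) B} = ⋃₀ H := by
  refine subset_antisymm (Set.sUnion_subset_sUnion fun _ hB => hB.1) ?_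
  rintro x ⟨B, hB, hxB⟩
  obtain ⟨C, hBC, hC⟩ := hH.exists_le_maximal hB
  exact ⟨C, hC, hBC hxB⟩

theorem DirFam.inter_eq_empty_of_maximal {𝓑 H : Set (Set U)} (h : DirFam 𝓑) (hH : H ⊆ 𝓑)
    {B C : Set U} (hB : Maximal (· ∈ H) B) (hC : Maximal (· ∈ H) C) (hne : B ≠ C) :
    B ∩ C = ∅ := by
  rcases h.2 B (hH hB.1) C (hH hC.1) with hBC | hCB | hdisj
  · exact absurd (hB.eq_of_subset hC.1 hBC) hne
  · exact absurd (hC.eq_of_subset hB.1 hCB).symm hne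
  · exact hdisj

theorem isSCD_ball {𝓑 : Set (Set U)} {A : Set U} (hA : A ∈ 𝓑) :
    IsSCD 𝓑 A 1 (fun _ => A) (fun _ => ∅) := by
  refine ⟨fun _ => hA, fun _ => Set.finite_empty, fun _ => Set.empty_subset _,
    fun _ _ hB => absurd hB (Set.notMem_empty _), fun _ _ hB => absurd hB (Set.notMem_empty _),
    fun i j hij => absurd (Subsingleton.elim i j) hij, fun _ _ => Set.notMem_empty _, ?_⟩
  simp [Set.iUnion_const]

theorem exists_isSCD_of_pairwise_inter_eq_empty {𝓑 M : Set (Set U)} (hM : M.Finite)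
    (hM𝓑 : M ⊆ 𝓑) (hdisj : M.Pairwise fun B C => B ∩ C = ∅) :
    ∃ (n : ℕ) (A : Fin n → Set U), Set.range A = M ∧ IsSCD 𝓑 (⋃₀ M) n A (fun _ => ∅) := by
  obtain ⟨n, A, hinj, hrange⟩ := hM.fin_param
  have hAM : ∀ i, A i ∈ M := fun i => hrange ▸ Set.mem_range_self i
  refine ⟨n, A, hrange, fun i => hM𝓑 (hAM i), fun _ => Set.finite_empty,
    fun _ => Set.empty_subset _, fun _ _ hB => absurd hB (Set.notMem_empty _),
    fun _ _ hB => absurd hB (Set.notMem_empty _), fun i j hij => ?_,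
    fun _ _ => Set.notMem_empty _, ?_⟩
  · simpa using hdisj (hAM i) (hAM j) (hinj.ne hij)
  · simp [← hrange, Set.sUnion_range]

theorem stmt10_general (𝓑 : Set (Set U)) (h : DirFam 𝓑)
    (huniq : ∀ (X : Set U) (n m : ℕ) (A : Fin n → Set U) (H : Fin n → Set (Set U))
      (A' : Fin m → Set U) (H' : Fin m → Set (Set U)),
      IsSCD 𝓑 X n A H → IsSCD 𝓑 X m A' H' →
      Set.range (fun i => A i \ ⋃₀ H i) = Set.range (fun j => A' j \ ⋃₀ H' j)) :
    Unpackable 𝓑 := by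
  rintro A hA H hHfin hH𝓑 hproper hAH
  set M := {B | Maximal (· ∈ H) B}
  have hMH : M ⊆ H := fun _ hB => hB.1
  obtain ⟨n, A', hrange, hscd⟩ := exists_isSCD_of_pairwise_inter_eq_empty
    (hHfin.subset hMH) (hMH.trans hH𝓑)
    fun _ hB _ hC hne => h.inter_eq_empty_of_maximal hH𝓑 hB hC hne
  rw [hHfin.sUnion_setOf_maximal, ← hAH] at hscd
  have hpieces := huniq _ _ _ _ _ _ _ (isSCD_ball hA) hscd
  obtain ⟨j, hj⟩ : A ∈ Set.range fun j => A' j \ ⋃₀ ∅ := hpieces ▸ ⟨0, by simp⟩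
  have hA'j : A' j ∈ M := hrange ▸ Set.mem_range_self j
  exact (hproper _ (hMH hA'j)).ne (by simpa using hj)

/-- If every constructible set has a unique swiss cheese decomposition, then the family
is unpackable. -/
theorem stmt10 (𝓑 : Set (Set U)) (h : DirFam 𝓑) (hU : (Set.univ : Set U) ∈ 𝓑)
    (hex : ∀ X : Set U, Constr 𝓑 X →
      ∃ (n : ℕ) (A : Fin n → Set U) (H : Fin n → Set (Set U)), IsSCD 𝓑 X n A H)
    (huniq : ∀ (X : Set U) (n m : ℕ) (A : Fin n → Set U) (H : Fin n → Set (Set U))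
      (A' : Fin m → Set U) (H' : Fin m → Set (Set U)),
      IsSCD 𝓑 X n A H → IsSCD 𝓑 X m A' H' →
      Set.range (fun i => A i \ ⋃₀ H i) = Set.range (fun j => A' j \ ⋃₀ H' j)) :
    Unpackable 𝓑 :=
  stmt10_general 𝓑 h huniq
end

section
/- For any finite set 𝓢 of balls in a directed family with U ∈ 𝓑, the set Ch(𝓢) is constructible, and the swiss cheeses B \ ⋃Sub(B,𝓢) for B on even levels of (𝓢,⊆) are pairwise disjoint. -/
variable {U : Type*}

/-- Levels of a (finite) subset of a partial order: Lev 0 is the set of maximal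
elements, and Lev (n+1) is Lev n of the set with its maximal elements removed. -/
def Lev {α : Type*} [PartialOrder α] : ℕ → Set α → Set α
  | 0, S => {a | a ∈ S ∧ ∀ b ∈ S, a ≤ b → a = b}
  | n + 1, S => Lev n (S \ {a | a ∈ S ∧ ∀ b ∈ S, a ≤ b → a = b})

/-- The swiss cheese operator: the union, over balls B on even levels of 𝓢, of
B minus the union of its immediate predecessors (the next-level balls inside B). -/
def Ch (𝓢 : Set (Set U)) : Set U :=
  ⋃ n : ℕ, ⋃ B ∈ Lev (2 * n) 𝓢, B \ ⋃₀ {C | C ∈ Lev (2 * n + 1) 𝓢 ∧ C ⊆ B}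

/-!
Constructibility is a finiteness statement: every swiss cheese has the form `B \ ⋃₀ T` with
`B ∈ 𝓢` and `T ⊆ 𝓢`. Disjointness rests on one observation about levels of a directed family:
if `C ⊊ B` with `B` on level `k`, then `C` survives `k + 1` removals of maximal elements, so it
lies below a ball `D` of level `k + 1`; `D` meets `B` (both contain `C`) and cannot contain it,
so `D ⊆ B`. Hence if two distinct cheeses met, their balls would be nested and the smaller
one would lie in a hole of the larger.
-/

section Levels

variable {α : Type*} [PartialOrder α]

lemma mem_lev_zero {S : Set α} {a : α} : a ∈ Lev 0 S ↔ Maximal (· ∈ S) a :=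
  maximal_iff.symm

lemma lev_succ (n : ℕ) (S : Set α) :
    Lev (n + 1) S = Lev n {a ∈ S | ¬ Maximal (· ∈ S) a} := by
  simp only [maximal_iff]
  rfl

lemma lev_subset : ∀ (n : ℕ) (S : Set α), Lev n S ⊆ S
  | 0, _ => fun _ ha => ha.1
  | n + 1, S => by
    rw [lev_succ]
    exact (lev_subset n _).trans (Set.sep_subset _ _)

lemma exists_mem_lev_succ_ge_of_lt {k : ℕ} {S : Set α} (hS : S.Finite) {b c : α}
    (hb : b ∈ Lev k S) (hc : c ∈ S) (hcb : c < b) :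
    ∃ d ∈ Lev (k + 1) S, c ≤ d ∧ ¬ b ≤ d := by
  induction k generalizing S with
  | zero =>
    rw [mem_lev_zero] at hb
    have hc' : c ∈ {a ∈ S | ¬ Maximal (· ∈ S) a} := ⟨hc, fun hmax => hmax.not_gt hb.1 hcb⟩
    obtain ⟨d, hcd, hd⟩ := (hS.subset (Set.sep_subset _ _)).exists_le_maximal hc'
    refine ⟨d, by rw [lev_succ, mem_lev_zero]; exact hd, hcd, fun hbd => ?_⟩
    exact hd.1.2 (hb.eq_of_le hd.1.1 hbd ▸ hb)
  | succ k ih =>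
    rw [lev_succ] at hb ⊢
    exact ih (hS.subset (Set.sep_subset _ _)) hb
      ⟨hc, fun hmax => hmax.not_gt (lev_subset _ _ hb).1 hcb⟩

end Levels

namespace Constr

variable {𝓑 : Set (Set U)}

lemma empty (hU : (Set.univ : Set U) ∈ 𝓑) : Constr 𝓑 ∅ := by
  simpa using (ball hU).compl

lemma diff {X Y : Set U} (hX : Constr 𝓑 X) (hY : Constr 𝓑 Y) : Constr 𝓑 (X \ Y) := by
  have hXY : X \ Y = (Xᶜ ∪ Y)ᶜ := by rw [Set.compl_union, compl_compl, Set.sdiff_eq]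
  exact hXY ▸ (hX.compl.union hY).compl

lemma sUnion (hU : (Set.univ : Set U) ∈ 𝓑) {T : Set (Set U)} (hT : T.Finite)
    (h : ∀ X ∈ T, Constr 𝓑 X) : Constr 𝓑 (⋃₀ T) := by
  induction T, hT using Set.Finite.induction_on with
  | empty => simpa using empty hU
  | insert _ _ ih =>
    rw [Set.sUnion_insert]
    exact (h _ (Set.mem_insert _ _)).union (ih fun X hX => h X (Set.mem_insert_of_mem _ hX))

end Constr

def cheese (𝓢 : Set (Set U)) (k : ℕ) (B : Set U) : Set U :=
  B \ ⋃₀ {C | C ∈ Lev (k + 1) 𝓢 ∧ C ⊆ B}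

lemma constr_cheese {𝓑 𝓢 : Set (Set U)} (hU : (Set.univ : Set U) ∈ 𝓑) (h𝓢 : 𝓢 ⊆ 𝓑)
    (hfin : 𝓢.Finite) (k : ℕ) {B : Set U} (hB : B ∈ 𝓢) : Constr 𝓑 (cheese 𝓢 k B) :=
  (Constr.ball (h𝓢 hB)).diff <| Constr.sUnion hU (hfin.subset fun _ hC => lev_subset _ _ hC.1)
    fun _ hC => Constr.ball (h𝓢 (lev_subset _ _ hC.1))

lemma constr_ch {𝓑 𝓢 : Set (Set U)} (hU : (Set.univ : Set U) ∈ 𝓑) (h𝓢 : 𝓢 ⊆ 𝓑)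
    (hfin : 𝓢.Finite) : Constr 𝓑 (Ch 𝓢) := by
  have hCh : Ch 𝓢 = ⋃₀ {X | ∃ n, ∃ B ∈ Lev (2 * n) 𝓢, cheese 𝓢 (2 * n) B = X} := by
    ext; simp [Ch, cheese, and_left_comm]
  rw [hCh]
  refine Constr.sUnion hU ?_ ?_
  · refine ((hfin.prod hfin.finite_subsets).image
      fun p : Set U × Set (Set U) => p.1 \ ⋃₀ p.2).subset ?_
    rintro _ ⟨n, B, hB, rfl⟩
    exact ⟨(B, _), ⟨lev_subset _ _ hB, fun _ hC => lev_subset _ _ hC.1⟩, rfl⟩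
  · rintro _ ⟨n, B, hB, rfl⟩
    exact constr_cheese hU h𝓢 hfin _ (lev_subset _ _ hB)

namespace DirFam

variable {𝓑 𝓢 : Set (Set U)}

lemma exists_mem_lev_succ_between (h : DirFam 𝓑) (h𝓢 : 𝓢 ⊆ 𝓑) (hfin : 𝓢.Finite)
    {k : ℕ} {B C : Set U} (hB : B ∈ Lev k 𝓢) (hC : C ∈ 𝓢)
    (hCB : C ⊂ B) : ∃ D ∈ Lev (k + 1) 𝓢, C ⊆ D ∧ D ⊆ B := by
  obtain ⟨D, hD, hCD, hBD⟩ := exists_mem_lev_succ_ge_of_lt hfin hB hC hCB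
  refine ⟨D, hD, hCD, ?_⟩
  obtain ⟨x, hx⟩ := h.1 C (h𝓢 hC)
  rcases h.2 D (h𝓢 (lev_subset _ _ hD)) B (h𝓢 (lev_subset _ _ hB)) with hDB | hBD' | hdisj
  · exact hDB
  · exact absurd hBD' hBD
  · exact absurd hdisj (Set.nonempty_iff_ne_empty.mp ⟨x, hCD hx, hCB.1 hx⟩)

lemma notMem_cheese_of_ssubset (h : DirFam 𝓑) (h𝓢 : 𝓢 ⊆ 𝓑) (hfin : 𝓢.Finite)
    {k : ℕ} {B C : Set U} (hB : B ∈ Lev k 𝓢) (hC : C ∈ 𝓢)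
    (hCB : C ⊂ B) {x : U} (hx : x ∈ C) : x ∉ cheese 𝓢 k B := fun hxB =>
  let ⟨D, hD, hCD, hDB⟩ := h.exists_mem_lev_succ_between h𝓢 hfin hB hC hCB
  hxB.2 ⟨D, ⟨hD, hDB⟩, hCD hx⟩

lemma disjoint_cheese (h : DirFam 𝓑) (h𝓢 : 𝓢 ⊆ 𝓑) (hfin : 𝓢.Finite)
    {k l : ℕ} {B C : Set U} (hB : B ∈ Lev k 𝓢) (hC : C ∈ Lev l 𝓢)
    (hne : B ≠ C) : Disjoint (cheese 𝓢 k B) (cheese 𝓢 l C) := by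
  rw [Set.disjoint_left]
  intro x hxB hxC
  rcases h.2 B (h𝓢 (lev_subset _ _ hB)) C (h𝓢 (lev_subset _ _ hC)) with hBC | hCB | hdisj
  · exact h.notMem_cheese_of_ssubset h𝓢 hfin hC (lev_subset _ _ hB) (hBC.ssubset_of_ne hne)
      hxB.1 hxC
  · exact h.notMem_cheese_of_ssubset h𝓢 hfin hB (lev_subset _ _ hC) (hCB.ssubset_of_ne hne.symm)
      hxC.1 hxB
  · exact (hdisj.subset ⟨hxB.1, hxC.1⟩ : x ∈ (∅ : Set U))

end DirFam

/-- Ch(𝓢) is constructible, and the swiss cheeses forming it (for distinct even-level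
balls) are pairwise disjoint. -/
theorem stmt12 (𝓑 : Set (Set U)) (h : DirFam 𝓑) (hU : (Set.univ : Set U) ∈ 𝓑)
    (𝓢 : Set (Set U)) (h𝓢 : 𝓢 ⊆ 𝓑) (hfin : 𝓢.Finite) :
    Constr 𝓑 (Ch 𝓢) ∧
      ∀ (n m : ℕ) (B C : Set U), B ∈ Lev (2 * n) 𝓢 → C ∈ Lev (2 * m) 𝓢 → B ≠ C →
        (B \ ⋃₀ {D | D ∈ Lev (2 * n + 1) 𝓢 ∧ D ⊆ B}) ∩
          (C \ ⋃₀ {D | D ∈ Lev (2 * m + 1) 𝓢 ∧ D ⊆ C}) = ∅ :=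
  ⟨constr_ch hU h𝓢 hfin, fun _ _ _ _ hB hC hne =>
    Set.disjoint_iff_inter_eq_empty.mp (h.disjoint_cheese h𝓢 hfin hB hC hne)⟩
end
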